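/- (Fictitious space lemma, (NE3)) Assume the stability bounds (NE1) and (NE2) with constants 0 < λ_min ≤ λ_max. Then the additive Schwarz operator P is a bounded, self-adjoint (with respect to a(·,·)), bijective operator on V satisfying λ_min a(v,v) ≤ a(Pv,v) ≤ λ_max a(v,v) for all v ∈ V, and for every v ∈ V the decomposition norm satisfies |||v|||_ω² := inf{ Σ_{i=0}^n ω_i a_i(v_i,v_i) : v_i ∈ V_i for all i and Σ_{i=0}^n ω_i R_i v_i = v } = a(P^{-1}v, v). -/
import Mathlib


open scoped RealInnerProductSpace

/-- The additive Schwarz operator `P = ∑_i ω_i R_i T_i` (with `T_i = R_i^*`) as a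
continuous linear (hence bounded) operator on `V`. -/
noncomputable def addSchwarzOp
    {V : Type*} [NormedAddCommGroup V] [InnerProductSpace ℝ V] [CompleteSpace V]
    {n : ℕ} {W : Fin (n + 1) → Type*}
    [∀ i, NormedAddCommGroup (W i)] [∀ i, InnerProductSpace ℝ (W i)]
    [∀ i, CompleteSpace (W i)]
    (R : ∀ i, W i →L[ℝ] V) (ω : Fin (n + 1) → ℝ) : V →L[ℝ] V :=
  ∑ i, ω i • (R i).comp (ContinuousLinearMap.adjoint (R i))

section Aux

variable {V : Type*} [NormedAddCommGroup V] [InnerProductSpace ℝ V] [CompleteSpace V]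
    {n : ℕ} {W : Fin (n + 1) → Type*}
    [∀ i, NormedAddCommGroup (W i)] [∀ i, InnerProductSpace ℝ (W i)]
    [∀ i, CompleteSpace (W i)]

lemma aso_apply (R : ∀ i, W i →L[ℝ] V) (ω : Fin (n + 1) → ℝ) (v : V) :
    addSchwarzOp R ω v = ∑ i, ω i • R i (ContinuousLinearMap.adjoint (R i) v) := by
  simp [addSchwarzOp]

lemma aso_inner (R : ∀ i, W i →L[ℝ] V) (ω : Fin (n + 1) → ℝ) (u w : V) :
    ⟪addSchwarzOp R ω u, w⟫ =
      ∑ i, ω i * ⟪ContinuousLinearMap.adjoint (R i) u, ContinuousLinearMap.adjoint (R i) w⟫ := by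
  rw [aso_apply, sum_inner]
  congr 1; ext i
  rw [real_inner_smul_left]
  congr 1
  rw [real_inner_comm, ← ContinuousLinearMap.adjoint_inner_left, real_inner_comm]

lemma aso_inner_self (R : ∀ i, W i →L[ℝ] V) (ω : Fin (n + 1) → ℝ) (v : V) :
    ⟪addSchwarzOp R ω v, v⟫ = ∑ i, ω i * ‖ContinuousLinearMap.adjoint (R i) v‖ ^ 2 := by
  rw [aso_inner]
  congr 1; ext i
  rw [real_inner_self_eq_norm_sq]

end Aux

/-- **fictitious space lemma, (NE3).** Under (NE1), (NE2) with
`0 < λ_min ≤ λ_max`, the additive Schwarz operator `P` is bounded (it is a continuous linear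
operator), self-adjoint with respect to `a(·,·)`, bijective, satisfies
`λ_min a(v,v) ≤ a(Pv,v) ≤ λ_max a(v,v)`, and the decomposition norm satisfies
`|||v|||_ω² = inf { ∑_i ω_i a_i(v_i,v_i) : ∑_i ω_i R_i v_i = v } = a(P⁻¹v, v)`,
where `P⁻¹ = Q` is the (two-sided) inverse of `P`. -/
theorem fictitious_space_lemma
    {V : Type*} [NormedAddCommGroup V] [InnerProductSpace ℝ V] [CompleteSpace V]
    {n : ℕ} {W : Fin (n + 1) → Type*}
    [∀ i, NormedAddCommGroup (W i)] [∀ i, InnerProductSpace ℝ (W i)]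
    [∀ i, CompleteSpace (W i)]
    (R : ∀ i, W i →L[ℝ] V) (ω : Fin (n + 1) → ℝ) (hω : ∀ i, 0 < ω i)
    (lmin lmax : ℝ) (hlmin : 0 < lmin) (hminmax : lmin ≤ lmax)
    (hNE1 : ∀ v : V, lmin * ⟪v, v⟫ ≤ ⟪addSchwarzOp R ω v, v⟫)
    (hNE2 : ∀ w : ∀ i, W i,
      ‖∑ i, ω i • R i (w i)‖ ^ 2 ≤ lmax * ∑ i, ω i * ‖w i‖ ^ 2) :
    (∀ u w : V, ⟪addSchwarzOp R ω u, w⟫ = ⟪u, addSchwarzOp R ω w⟫) ∧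
    Function.Bijective (addSchwarzOp R ω) ∧
    (∀ v : V, lmin * ⟪v, v⟫ ≤ ⟪addSchwarzOp R ω v, v⟫ ∧
      ⟪addSchwarzOp R ω v, v⟫ ≤ lmax * ⟪v, v⟫) ∧
    ∃ Q : V →L[ℝ] V,
      (∀ v, addSchwarzOp R ω (Q v) = v) ∧ (∀ v, Q (addSchwarzOp R ω v) = v) ∧
      ∀ v : V,
        sInf {t : ℝ | ∃ w : ∀ i, W i,
            (∑ i, ω i • R i (w i)) = v ∧ t = ∑ i, ω i * ‖w i‖ ^ 2} = ⟪Q v, v⟫ := by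
  set P := addSchwarzOp R ω with hP
  -- self-adjointness
  have hsym : ∀ u w : V, ⟪P u, w⟫ = ⟪u, P w⟫ := by
    intro u w
    rw [real_inner_comm (P w) u, aso_inner, aso_inner]
    exact Finset.sum_congr rfl fun i _ => by rw [real_inner_comm]
  -- upper bound
  have hupper : ∀ v : V, ⟪P v, v⟫ ≤ lmax * ⟪v, v⟫ := by
    intro v
    have hnn : (0:ℝ) ≤ ⟪P v, v⟫ := by
      rw [aso_inner_self]
      exact Finset.sum_nonneg fun i _ => mul_nonneg (hω i).le (sq_nonneg _)
    have h2 : ‖P v‖ ^ 2 ≤ lmax * ⟪P v, v⟫ := by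
      have := hNE2 (fun i => ContinuousLinearMap.adjoint (R i) v)
      rw [← aso_apply, ← aso_inner_self] at this
      exact this
    have h3 : ⟪P v, v⟫ ≤ ‖P v‖ * ‖v‖ := real_inner_le_norm _ _
    rw [real_inner_self_eq_norm_sq]
    rcases eq_or_lt_of_le hnn with h | h
    · nlinarith [sq_nonneg ‖v‖]
    · nlinarith [sq_nonneg ‖v‖, norm_nonneg (P v), norm_nonneg v]
  -- Lax–Milgram
  have coercive : IsCoercive ((innerSL ℝ).comp P) := by
    refine ⟨lmin, hlmin, fun u => ?_⟩
    have := hNE1 u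
    rw [real_inner_self_eq_norm_mul_norm] at this
    simpa [mul_assoc] using this
  set E := coercive.continuousLinearEquivOfBilin with hEdef
  have hE : ∀ v : V, E v = P v := by
    intro v
    apply ext_inner_right ℝ
    intro w
    rw [coercive.continuousLinearEquivOfBilin_apply]
    simp
  have hEfun : ⇑P = ⇑E := funext fun v => (hE v).symm
  have hbij : Function.Bijective P := by rw [hEfun]; exact E.bijective
  refine ⟨hsym, hbij, fun v => ⟨hNE1 v, hupper v⟩, (E.symm : V →L[ℝ] V), ?_, ?_, ?_⟩
  · intro v; rw [← hE]; exact E.apply_symm_apply v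
  · intro v; rw [← hE]; exact E.symm_apply_apply v
  · intro v
    set u : V := E.symm v with hu
    have huv : P u = v := by rw [← hE]; exact E.apply_symm_apply v
    have h1 : ((E.symm : V →L[ℝ] V) v) = u := rfl
    have hQv : (⟪(E.symm : V →L[ℝ] V) v, v⟫ : ℝ) = ⟪P u, u⟫ := by
      rw [h1, real_inner_comm, ← huv]
    apply IsLeast.csInf_eq
    constructor
    · refine ⟨fun i => ContinuousLinearMap.adjoint (R i) u, ?_, ?_⟩
      · rw [← aso_apply]; exact huv
      · rw [hQv, aso_inner_self]
    · rintro t ⟨w, hw, rfl⟩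
      have key : (⟪(E.symm : V →L[ℝ] V) v, v⟫ : ℝ) ≤
          (⟪P u, u⟫ + ∑ i, ω i * ‖w i‖ ^ 2) / 2 := by
        have expand : (⟪(E.symm : V →L[ℝ] V) v, v⟫ : ℝ) =
            ∑ i, ω i * ⟪ContinuousLinearMap.adjoint (R i) u, w i⟫ := by
          rw [h1, ← hw, inner_sum]
          refine Finset.sum_congr rfl fun i _ => ?_
          rw [real_inner_smul_right]
          congr 1
          exact (ContinuousLinearMap.adjoint_inner_left _ _ _).symm
        rw [expand, aso_inner_self, ← Finset.sum_add_distrib, Finset.sum_div]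
        refine Finset.sum_le_sum fun i _ => ?_
        have h2 := real_inner_le_norm (ContinuousLinearMap.adjoint (R i) u) (w i)
        have h3 := (hω i).le
        nlinarith [sq_nonneg (‖ContinuousLinearMap.adjoint (R i) u‖ - ‖w i‖)]
      rw [hQv] at key ⊢
      linarith
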